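/- For all real numbers μ, a01, b01, c001: if the simplified moment matrix M1s(μ, a01, b01, c001) is positive semidefinite, then μ ≤ 0. -/

import Mathlib

noncomputable def M1s (μ a01 b01 c001 : ℝ) : Matrix (Fin 9) (Fin 9) ℝ :=
  !![1, 1/2, (4-μ)/6, 1/2, 1/2, (μ+2)/6, (μ+2)/6, 1/2, (1-μ)/6;
     1/2, 1/2, a01, (μ+2)/6, (μ+2)/6, (μ+2)/6, (μ+2)/6, (μ+2)/6, a01-(1-μ)/6;
     (4-μ)/6, a01, (4-μ)/6, 1/2, (1-μ)/6, (μ+2)/6, a01-(1-μ)/6, 1/2, (1-μ)/6;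
     1/2, (μ+2)/6, 1/2, 1/2, b01, (μ+2)/6, c001, 1/2, b01;
     1/2, (μ+2)/6, (1-μ)/6, b01, 1/2, c001, (μ+2)/6, b01, (1-μ)/6;
     (μ+2)/6, (μ+2)/6, (μ+2)/6, (μ+2)/6, c001, (μ+2)/6, c001, (μ+2)/6, c001;
     (μ+2)/6, (μ+2)/6, a01-(1-μ)/6, c001, (μ+2)/6, c001, (μ+2)/6, c001, a01-(1-μ)/6;
     1/2, (μ+2)/6, 1/2, 1/2, b01, (μ+2)/6, c001, 1/2, b01;
     (1-μ)/6, a01-(1-μ)/6, (1-μ)/6, b01, (1-μ)/6, c001, a01-(1-μ)/6, b01, (1-μ)/6]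


def M1sWitness : Fin 9 → ℝ := ![1, -1, -1, 0, -1, 1, 1, 0, 0]

open Matrix in
theorem M1sWitness_dotProduct_M1s_mulVec (μ a01 b01 c001 : ℝ) :
    M1sWitness ⬝ᵥ (M1s μ a01 b01 c001 *ᵥ M1sWitness) = -μ / 2 := by
  simp only [M1sWitness, M1s, mulVec, dotProduct, Fin.sum_univ_succ, Fin.sum_univ_zero,
    of_apply, cons_val', cons_val_zero, cons_val_succ, empty_val', cons_val_fin_one]
  ring

theorem stmt3 (μ a01 b01 c001 : ℝ) (h : (M1s μ a01 b01 c001).PosSemidef) :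
    μ ≤ 0 := by
  have hv := h.dotProduct_mulVec_nonneg M1sWitness
  rw [star_trivial, M1sWitness_dotProduct_M1s_mulVec] at hv
  linarith
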